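/- Let δ be a Jordan derivation of a 2-torsion free ring S into itself. Then for all a, b, c ∈ S: δ(abc + cba) = δ(a)bc + aδ(b)c + abδ(c) + δ(c)ba + cδ(b)a + cbδ(a). -/
import Mathlib

private lemma jd_pair {S : Type*} [Ring S] (δ : S →+ S)
    (hJ : ∀ a : S, δ (a * a) = δ a * a + a * δ a) (a b : S) :
    δ (a * b + b * a) = δ a * b + a * δ b + δ b * a + b * δ a := by
  have h := hJ (a + b)
  rw [add_mul, mul_add, mul_add, map_add, map_add, map_add, hJ a, hJ b, map_add] at h
  rw [map_add]
  linear_combination (norm := noncomm_ring) h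

private lemma jd_aba {S : Type*} [Ring S] (htor : ∀ s : S, s + s = 0 → s = 0) (δ : S →+ S)
    (hJ : ∀ a : S, δ (a * a) = δ a * a + a * δ a) (a b : S) :
    δ (a * b * a) = δ a * b * a + a * δ b * a + a * b * δ a := by
  have h1 := jd_pair δ hJ a (a * b + b * a)
  have h2 := jd_pair δ hJ (a * a) b
  rw [jd_pair δ hJ a b] at h1
  have e : a * (a * b + b * a) + (a * b + b * a) * a
      = (a * a * b + b * (a * a)) + (a * b * a + a * b * a) := by noncomm_ring
  rw [e, map_add, h2, hJ a] at h1
  rw [map_add] at h1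
  have key : (δ (a * b * a) - (δ a * b * a + a * δ b * a + a * b * δ a))
      + (δ (a * b * a) - (δ a * b * a + a * δ b * a + a * b * δ a)) = 0 := by
    linear_combination (norm := noncomm_ring) h1
  have := htor _ key
  linear_combination (norm := noncomm_ring) this

/-- **Lemma 2.2 (iii)** (Herstein): If `δ` is a Jordan derivation of a 2-torsion free ring `S`
into itself, then `δ (abc + cba) = δ(a)bc + aδ(b)c + abδ(c) + δ(c)ba + cδ(b)a + cbδ(a)`
for all `a, b, c ∈ S`. -/
theorem jordan_tri_stmt4 {S : Type*} [Ring S]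
    (htor : ∀ s : S, s + s = 0 → s = 0)
    (δ : S →+ S) (hJ : ∀ a : S, δ (a * a) = δ a * a + a * δ a)
    (a b c : S) :
    δ (a * b * c + c * b * a) =
      δ a * b * c + a * δ b * c + a * b * δ c + δ c * b * a + c * δ b * a + c * b * δ a := by
  have h := jd_aba htor δ hJ (a + c) b
  have e : (a + c) * b * (a + c) = (a * b * c + c * b * a) + (a * b * a + c * b * c) := by
    noncomm_ring
  simp only [e, map_add] at h
  rw [jd_aba htor δ hJ a b, jd_aba htor δ hJ c b] at h
  simp only [map_add]
  linear_combination (norm := noncomm_ring) h
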